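/- Let Θ be symmetric positive semidefinite with eigenvalues λ_1 ≥ … ≥ λ_p ≥ 0 and orthonormal eigenvectors v_1,…,v_p, let 1 ≤ s < p, and ω_k = Σ_{i=1}^s v_{ik}². If for some index h one has α_h ≥ (1+c)·λ_{s+1}² for some c > 0, where α_h = Σ_l Θ_{lh}², then ω_h ≥ (c/(1+c)) · α_h / λ_1². -/
import Mathlib


open Matrix BigOperators

/-- If the weighted degree `α_h` exceeds `(1+c)·λ_{s+1}²`, then the influence
measure satisfies `ω_h ≥ (c/(1+c))·α_h/λ_1²`. -/
theorem large_degree_implies_large_influence {p s : ℕ} (hs1 : 1 ≤ s) (hsp : s < p)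
    (Θ : Matrix (Fin p) (Fin p) ℝ) (hsymm : Θ.IsSymm) (hpsd : Θ.PosSemidef)
    (lam : Fin p → ℝ) (v : Fin p → Fin p → ℝ)
    (hanti : Antitone lam) (hnn : ∀ i, 0 ≤ lam i)
    (horth : ∀ i j, v i ⬝ᵥ v j = if i = j then (1 : ℝ) else 0)
    (hdecomp : Θ = ∑ i, lam i • Matrix.vecMulVec (v i) (v i))
    (c : ℝ) (hc : 0 < c) (h : Fin p)
    (hsig : (1 + c) * (lam ⟨s, hsp⟩) ^ 2 ≤ ∑ l, (Θ l h) ^ 2) :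
    (c / (1 + c)) * ((∑ l, (Θ l h) ^ 2) / (lam ⟨0, by omega⟩) ^ 2) ≤
      ∑ i ∈ Finset.univ.filter fun i : Fin p => (i : ℕ) < s, (v i h) ^ 2 := by
  have p0 : (0 : ℕ) < p := by omega
  set A : ℝ := ∑ l, (Θ l h) ^ 2 with hA
  set ω : ℝ := ∑ i ∈ Finset.univ.filter fun i : Fin p => (i : ℕ) < s, (v i h) ^ 2 with hω
  -- entries of Θ
  have hΘ : ∀ l, Θ l h = ∑ i, lam i * (v i l * v i h) := by
    intro l
    rw [hdecomp]
    simp [Matrix.sum_apply, Matrix.vecMulVec_apply]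
  -- key identity A = ∑ λ_i² v_{ih}²
  have key : A = ∑ i, (lam i) ^ 2 * (v i h) ^ 2 := by
    rw [hA]
    simp_rw [hΘ, sq, Finset.sum_mul_sum]
    rw [Finset.sum_comm]
    refine Finset.sum_congr rfl fun i _ => ?_
    rw [Finset.sum_comm]
    have : ∀ j : Fin p, ∑ l, lam i * (v i l * v i h) * (lam j * (v j l * v j h))
        = lam i * lam j * (v i h * v j h) * (v i ⬝ᵥ v j) := by
      intro j
      simp only [dotProduct, Finset.mul_sum]
      refine Finset.sum_congr rfl fun l _ => by ring
    simp_rw [this, horth]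
    simp [Finset.sum_ite_eq']
  -- columns orthonormal
  have col : ∑ i, (v i h) ^ 2 = 1 := by
    set M : Matrix (Fin p) (Fin p) ℝ := Matrix.of v with hM
    have one1 : M * Mᵀ = 1 := by
      ext i j
      simp only [Matrix.mul_apply, Matrix.transpose_apply, Matrix.one_apply, hM,
        Matrix.of_apply]
      simpa [dotProduct] using horth i j
    have one2 : Mᵀ * M = 1 := mul_eq_one_comm.mp one1
    have := congrArg (fun N => N h h) one2
    simp only [Matrix.mul_apply, Matrix.transpose_apply, Matrix.one_apply_eq, hM,
      Matrix.of_apply] at this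
    simpa [sq] using this
  -- split the key sum
  have hsplit := (Finset.sum_filter_add_sum_filter_not Finset.univ
    (fun i : Fin p => (i : ℕ) < s) (fun i => (lam i) ^ 2 * (v i h) ^ 2)).symm
  have hS1 : ∑ i ∈ Finset.univ.filter fun i : Fin p => (i : ℕ) < s,
      (lam i) ^ 2 * (v i h) ^ 2 ≤ (lam ⟨0, p0⟩) ^ 2 * ω := by
    rw [hω, Finset.mul_sum]
    refine Finset.sum_le_sum fun i _ => ?_
    have hle : lam i ≤ lam ⟨0, p0⟩ := hanti (by simp [Fin.le_def])
    have : (lam i) ^ 2 ≤ (lam ⟨0, p0⟩) ^ 2 := pow_le_pow_left₀ (hnn i) hle 2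
    exact mul_le_mul_of_nonneg_right this (sq_nonneg _)
  have hS2 : ∑ i ∈ Finset.univ.filter fun i : Fin p => ¬ (i : ℕ) < s,
      (lam i) ^ 2 * (v i h) ^ 2 ≤ (lam ⟨s, hsp⟩) ^ 2 := by
    calc ∑ i ∈ Finset.univ.filter fun i : Fin p => ¬ (i : ℕ) < s,
        (lam i) ^ 2 * (v i h) ^ 2
        ≤ ∑ i ∈ Finset.univ.filter fun i : Fin p => ¬ (i : ℕ) < s,
          (lam ⟨s, hsp⟩) ^ 2 * (v i h) ^ 2 := by
          refine Finset.sum_le_sum fun i hi => ?_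
          have hi' : s ≤ (i : ℕ) := by
            simpa using (Finset.mem_filter.mp hi).2
          have hle : lam i ≤ lam ⟨s, hsp⟩ := hanti (by simpa [Fin.le_def] using hi')
          exact mul_le_mul_of_nonneg_right (pow_le_pow_left₀ (hnn i) hle 2) (sq_nonneg _)
      _ = (lam ⟨s, hsp⟩) ^ 2 * ∑ i ∈ Finset.univ.filter fun i : Fin p => ¬ (i : ℕ) < s,
            (v i h) ^ 2 := by rw [Finset.mul_sum]
      _ ≤ (lam ⟨s, hsp⟩) ^ 2 * 1 := by
          refine mul_le_mul_of_nonneg_left ?_ (sq_nonneg _)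
          rw [← col]
          exact Finset.sum_le_sum_of_subset_of_nonneg (Finset.filter_subset _ _)
            (fun i _ _ => sq_nonneg _)
      _ = (lam ⟨s, hsp⟩) ^ 2 := mul_one _
  have hbound : A ≤ (lam ⟨0, p0⟩) ^ 2 * ω + (lam ⟨s, hsp⟩) ^ 2 := by
    rw [key, hsplit]
    exact add_le_add hS1 hS2
  have hωnn : 0 ≤ ω := Finset.sum_nonneg fun i _ => sq_nonneg _
  by_cases hL0 : lam ⟨0, p0⟩ = 0
  · have hall : ∀ i : Fin p, lam i = 0 := fun i =>
      le_antisymm (hL0 ▸ hanti (by simp [Fin.le_def])) (hnn i)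
    have hA0 : A = 0 := by
      rw [key]; exact Finset.sum_eq_zero fun i _ => by simp [hall i]
    rw [hA0]
    simpa using hωnn
  · have hL0sq : 0 < (lam ⟨0, p0⟩) ^ 2 := by positivity
    have h1c : (0 : ℝ) < 1 + c := by linarith
    have hpos : (0 : ℝ) < (1 + c) * (lam ⟨0, p0⟩) ^ 2 := by positivity
    show c / (1 + c) * (A / (lam ⟨0, p0⟩) ^ 2) ≤ ω
    rw [div_mul_div_comm, div_le_iff₀ hpos]
    nlinarith [hsig, hbound, hωnn, mul_le_mul_of_nonneg_left hbound h1c.le]
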